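/- Walkback corruption preserves the fixed point: Let P be a pmf on finite S, C a corruption kernel, and Q* the Bayes posterior kernel for (P, C). Define the k-step walkback corruption C_k recursively by C₁ = C and C_{k+1}(x̃|x) = Σ_{x̃', x'} C(x̃|x') Q*(x'|x̃') C_k(x̃'|x). Then each C_k is a Markov kernel, and for each k the x̃-marginal under walkback equals the original corrupted marginal: Σ_x P(x) C_k(x̃|x) = Σ_x P(x) C(x̃|x) = P̃(x̃) for all x̃. -/
import Mathlib


open Finset

/-- The `k`-step walkback corruption: `walkback C Q 0 = C₁ = C` and
`C_{k+1}(xt|x) = ∑_{xt',x'} C(xt|x') Q(x'|xt') C_k(xt'|x)`, where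
`C x xt = C(xt|x)` and `Q xt x = Q(x|xt)`. -/
noncomputable def walkback {S : Type*} [Fintype S]
    (C Q : S → S → ℝ) : ℕ → S → S → ℝ
  | 0 => C
  | (k + 1) => fun x xt => ∑ xt', ∑ x', C x' xt * Q xt' x' * walkback C Q k x xt'

/-- Walkback corruption preserves the fixed point: if `Q*` is the Bayes
posterior for `(P, C)`, then each `C_k` is a Markov kernel and the corrupted
marginal under `C_k` equals the original corrupted marginal `P̃` for all `k`. -/
theorem walkback_preserves_marginal
    {S : Type*} [Fintype S] [Nonempty S]
    (P : S → ℝ) (hPpos : ∀ x, 0 < P x) (hPsum : ∑ x, P x = 1)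
    (C : S → S → ℝ) (hCpos : ∀ x xt, 0 < C x xt) (hCsum : ∀ x, ∑ xt, C x xt = 1)
    (Pt : S → ℝ) (hPt : ∀ xt, Pt xt = ∑ x, P x * C x xt)
    (Qstar : S → S → ℝ) (hQstar : ∀ xt x, Qstar xt x = P x * C x xt / Pt xt) :
    -- each C_k is a Markov kernel
    (∀ k x, (∀ xt, 0 ≤ walkback C Qstar k x xt) ∧
      ∑ xt, walkback C Qstar k x xt = 1) ∧
    -- the xt-marginal under each walkback corruption equals P̃
    (∀ k xt, ∑ x, P x * walkback C Qstar k x xt = Pt xt) := by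
  have hPtpos : ∀ xt, 0 < Pt xt := by
    intro xt
    rw [hPt]
    exact Finset.sum_pos (fun x _ => mul_pos (hPpos x) (hCpos x xt)) univ_nonempty
  have hQpos : ∀ xt x, 0 < Qstar xt x := by
    intro xt x
    rw [hQstar]
    exact div_pos (mul_pos (hPpos x) (hCpos x xt)) (hPtpos xt)
  have hQsum : ∀ xt, ∑ x, Qstar xt x = 1 := by
    intro xt
    have : ∑ x, Qstar xt x = (∑ x, P x * C x xt) / Pt xt := by
      rw [Finset.sum_div]; exact Finset.sum_congr rfl fun x _ => hQstar xt x
    rw [this, ← hPt, div_self (hPtpos xt).ne']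
  have hbayes : ∀ xt x, Pt xt * Qstar xt x = P x * C x xt := by
    intro xt x
    rw [hQstar, mul_div_cancel₀ _ (hPtpos xt).ne']
  have hkernel : ∀ k x, (∀ xt, 0 ≤ walkback C Qstar k x xt) ∧
      ∑ xt, walkback C Qstar k x xt = 1 := by
    intro k
    induction k with
    | zero => exact fun x => ⟨fun xt => (hCpos x xt).le, hCsum x⟩
    | succ k ih =>
      intro x
      constructor
      · intro xt
        apply Finset.sum_nonneg; intro xt' _
        apply Finset.sum_nonneg; intro x' _
        exact mul_nonneg (mul_nonneg (hCpos x' xt).le (hQpos xt' x').le)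
          ((ih x).1 xt')
      · show ∑ xt, ∑ xt', ∑ x', C x' xt * Qstar xt' x' * walkback C Qstar k x xt' = 1
        rw [Finset.sum_comm]
        calc ∑ xt', ∑ xt, ∑ x', C x' xt * Qstar xt' x' * walkback C Qstar k x xt'
            = ∑ xt', walkback C Qstar k x xt' := by
              refine Finset.sum_congr rfl fun xt' _ => ?_
              rw [Finset.sum_comm]
              calc ∑ x', ∑ xt, C x' xt * Qstar xt' x' * walkback C Qstar k x xt'
                  = ∑ x', Qstar xt' x' * walkback C Qstar k x xt' := by
                    refine Finset.sum_congr rfl fun x' _ => ?_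
                    rw [← Finset.sum_mul, ← Finset.sum_mul, hCsum, one_mul]
                _ = walkback C Qstar k x xt' := by
                    rw [← Finset.sum_mul, hQsum, one_mul]
          _ = 1 := (ih x).2
  refine ⟨hkernel, ?_⟩
  intro k
  induction k with
  | zero => intro xt; exact (hPt xt).symm
  | succ k ih =>
    intro xt
    show ∑ x, P x * ∑ xt', ∑ x', C x' xt * Qstar xt' x' * walkback C Qstar k x xt' = Pt xt
    have step : ∀ x, P x * ∑ xt', ∑ x', C x' xt * Qstar xt' x' * walkback C Qstar k x xt'
        = ∑ xt', ∑ x', C x' xt * Qstar xt' x' * (P x * walkback C Qstar k x xt') := by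
      intro x
      rw [Finset.mul_sum]
      refine Finset.sum_congr rfl fun xt' _ => ?_
      rw [Finset.mul_sum]
      exact Finset.sum_congr rfl fun x' _ => by ring
    simp_rw [step]
    rw [Finset.sum_comm]
    have : ∀ xt', ∑ x, ∑ x', C x' xt * Qstar xt' x' * (P x * walkback C Qstar k x xt')
        = ∑ x', C x' xt * Qstar xt' x' * Pt xt' := by
      intro xt'
      rw [Finset.sum_comm]
      refine Finset.sum_congr rfl fun x' _ => ?_
      rw [← Finset.mul_sum, ← ih]
    simp_rw [this]
    rw [Finset.sum_comm]
    calc ∑ x', ∑ xt', C x' xt * Qstar xt' x' * Pt xt'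
        = ∑ x', P x' * C x' xt := by
          refine Finset.sum_congr rfl fun x' _ => ?_
          calc ∑ xt', C x' xt * Qstar xt' x' * Pt xt'
              = ∑ xt', C x' xt * (P x' * C x' xt') := by
                refine Finset.sum_congr rfl fun xt' _ => ?_
                rw [mul_assoc, mul_comm (Qstar xt' x'), hbayes]
            _ = C x' xt * P x' := by
                rw [← Finset.mul_sum, ← Finset.mul_sum, hCsum, mul_one]
            _ = P x' * C x' xt := mul_comm _ _
      _ = Pt xt := (hPt xt).symm
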